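/- (Soundness of the pure universal dependency scheme) Let Πφ be a true DQBF and let Π' be the prefix with the same universal and existential variables as Π in which, for every existential variable x, the dependency set of x in Π' equals {u ∈ D_x : (u,x) ∈ D^pu(Πφ)}. Then Π'φ is true. -/
import Mathlib


/-! ## Literals, clauses, DQBFs -/

structure Lit (V : Type) where
  var : V
  pos : Bool
deriving DecidableEq

def Lit.negate {V : Type} (l : Lit V) : Lit V := ⟨l.var, !l.pos⟩

abbrev Clause (V : Type) [DecidableEq V] : Type := Finset (Lit V)

/-- An S-form DQBF: universal variables `U`, existential variables `E`,
dependency sets `dep` (only meaningful on `E`), and a CNF matrix. -/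
structure DQBF (V : Type) [DecidableEq V] where
  U : Finset V
  E : Finset V
  dep : V → Finset V
  matrix : Finset (Clause V)

variable {V : Type} [DecidableEq V]

/-- Well-formedness of a DQBF. -/
def DQBF.WF (ψ : DQBF V) : Prop :=
  Disjoint ψ.U ψ.E ∧ (∀ x ∈ ψ.E, ψ.dep x ⊆ ψ.U) ∧
    ∀ C ∈ ψ.matrix, ∀ l ∈ C, l.var ∈ ψ.U ∪ ψ.E

/-- Dependency set with the convention `D_u = {u}` for universal variables. -/
def DQBF.depOf (ψ : DQBF V) (y : V) : Finset V := if y ∈ ψ.U then {y} else ψ.dep y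

/-! ## Semantics -/

def Clause.Sat (β : V → Bool) (C : Clause V) : Prop := ∃ l ∈ C, β l.var = l.pos

/-- A Skolem function set respects the dependency sets if the value of each
existential variable only depends on the assignment to its dependency set. -/
def DQBF.Respects (ψ : DQBF V) (f : V → (V → Bool) → Bool) : Prop :=
  ∀ x ∈ ψ.E, ∀ β γ : V → Bool, (∀ u ∈ ψ.dep x, β u = γ u) → f x β = f x γ

/-- The completed assignment `β ∪ f(β)`. -/
def DQBF.Completed (ψ : DQBF V) (f : V → (V → Bool) → Bool) (β : V → Bool) : V → Bool :=
  fun v => if v ∈ ψ.E then f v β else β v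

def DQBF.IsModel (ψ : DQBF V) (f : V → (V → Bool) → Bool) : Prop :=
  ψ.Respects f ∧ ∀ β : V → Bool, ∀ C ∈ ψ.matrix, Clause.Sat (ψ.Completed f β) C

def DQBF.IsTrue (ψ : DQBF V) : Prop := ∃ f, ψ.IsModel f

/-- Flip the value of variable `u` in an assignment. -/
def flipAt (u : V) (α : V → Bool) : V → Bool := fun w => if w = u then !(α w) else α w

/-- `(α, x, u)` is a dependency witness for the Skolem function set `f`. -/
def DepWitness (ψ : DQBF V) (f : V → (V → Bool) → Bool) (α : V → Bool) (x u : V) : Prop :=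
  f x α ≠ f x (flipAt u α)

/-! ## Resolution paths and dependency schemes -/

/-- The clauses of the matrix containing the literal `w`. -/
def DQBF.litClauses (ψ : DQBF V) (w : Lit V) : Finset (Clause V) :=
  ψ.matrix.filter fun C => w ∈ C

/-- `S_u`: the existential variables depending on `u`. -/
def DQBF.Sset (ψ : DQBF V) (u : V) : Finset V := ψ.E.filter fun x => u ∈ ψ.dep x

/-- `pathl^pu(w, ψ, χ, S)`: the least set of literals on `S`-variables reachable by a
`w`-pure resolution path starting from the clauses of `χ`. -/
inductive PathLPU (ψ : DQBF V) (w : Lit V) (χ : Finset (Clause V)) (S : Finset V) :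
    Lit V → Prop
  | base {C : Clause V} {l : Lit V} : C ∈ χ → l ∈ C → l.var ∈ S → PathLPU ψ w χ S l
  | step {p l : Lit V} {Ecl : Clause V} :
      PathLPU ψ w χ S p → Ecl ∈ ψ.matrix → p.negate ∈ Ecl → w.negate ∉ Ecl →
      l ∈ Ecl → l ≠ p.negate → l.var ∈ S → PathLPU ψ w χ S l

/-- `pathc^pu(w, ψ, χ, S)`: the corresponding set of reachable clauses. -/
inductive PathCPU (ψ : DQBF V) (w : Lit V) (χ : Finset (Clause V)) (S : Finset V) :
    Clause V → Prop
  | base {C : Clause V} : C ∈ χ → PathCPU ψ w χ S C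
  | step {p : Lit V} {Ecl : Clause V} :
      PathLPU ψ w χ S p → Ecl ∈ ψ.matrix → p.negate ∈ Ecl → w.negate ∉ Ecl →
      PathCPU ψ w χ S Ecl

/-- `pathl^rrs(ψ, χ, S)`: the analogous closure without the purity requirement. -/
inductive PathLRRS (ψ : DQBF V) (χ : Finset (Clause V)) (S : Finset V) : Lit V → Prop
  | base {C : Clause V} {l : Lit V} : C ∈ χ → l ∈ C → l.var ∈ S → PathLRRS ψ χ S l
  | step {p l : Lit V} {Ecl : Clause V} :
      PathLRRS ψ χ S p → Ecl ∈ ψ.matrix → p.negate ∈ Ecl →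
      l ∈ Ecl → l ≠ p.negate → l.var ∈ S → PathLRRS ψ χ S l

/-- `w ⤳ l` (pure path connection). -/
def ConnPU (ψ : DQBF V) (w l : Lit V) : Prop :=
  PathLPU ψ w (ψ.litClauses w) (ψ.Sset w.var) l

/-- `w ⤳ʳ l` (reflexive resolution path connection). -/
def ConnRRS (ψ : DQBF V) (w l : Lit V) : Prop :=
  PathLRRS ψ (ψ.litClauses w) (ψ.Sset w.var) l

/-- The pure universal dependency scheme `D^pu`. -/
def Dpu (ψ : DQBF V) (u x : V) : Prop :=
  u ∈ ψ.dep x ∧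
    ((ConnPU ψ ⟨u, true⟩ ⟨x, true⟩ ∧ ConnPU ψ ⟨u, false⟩ ⟨x, false⟩) ∨
      (ConnPU ψ ⟨u, false⟩ ⟨x, true⟩ ∧ ConnPU ψ ⟨u, true⟩ ⟨x, false⟩))

/-- The reflexive resolution path dependency scheme `D^rrs`. -/
def Drrs (ψ : DQBF V) (u x : V) : Prop :=
  u ∈ ψ.dep x ∧
    ((ConnRRS ψ ⟨u, true⟩ ⟨x, true⟩ ∧ ConnRRS ψ ⟨u, false⟩ ⟨x, false⟩) ∨
      (ConnRRS ψ ⟨u, false⟩ ⟨x, true⟩ ∧ ConnRRS ψ ⟨u, true⟩ ⟨x, false⟩))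

/-- The trivial dependency scheme `D^trv`. -/
def Dtrv (ψ : DQBF V) (u x : V) : Prop := u ∈ ψ.dep x

/-! ## LDQ(D)-Res -/

/-- Derivability of a clause in LDQ(D)-Res from the matrix of `ψ`, for a
dependency relation `D`. -/
inductive LDQDeriv (ψ : DQBF V) (D : V → V → Prop) : Clause V → Prop
  | ax {C : Clause V} : C ∈ ψ.matrix → LDQDeriv ψ D C
  | red {C : Clause V} {w : Lit V} :
      LDQDeriv ψ D (insert w C) → w.var ∈ ψ.U → w ∉ C →
      (∀ l ∈ C, l.var ∈ ψ.E → ¬ D w.var l.var) → LDQDeriv ψ D C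
  | res {Ec Fc : Clause V} {x : V} :
      x ∈ ψ.E →
      LDQDeriv ψ D (insert ⟨x, false⟩ Ec) → LDQDeriv ψ D (insert ⟨x, true⟩ Fc) →
      (⟨x, false⟩ : Lit V) ∉ Ec → (⟨x, true⟩ : Lit V) ∉ Fc →
      (∀ v ∈ Ec, v.var ∈ ψ.U → v.negate ∈ Fc → ¬ D v.var x) →
      LDQDeriv ψ D (Ec ∪ Fc)

/-- A single valid LDQ(D)-Res step, given the list of previously derived clauses. -/
def LDQStep (ψ : DQBF V) (D : V → V → Prop) (prev : List (Clause V)) (C : Clause V) : Prop :=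
  C ∈ ψ.matrix ∨
    (∃ w : Lit V, w.var ∈ ψ.U ∧ w ∉ C ∧ insert w C ∈ prev ∧
      ∀ l ∈ C, l.var ∈ ψ.E → ¬ D w.var l.var) ∨
    (∃ (x : V) (Ec Fc : Clause V), x ∈ ψ.E ∧ C = Ec ∪ Fc ∧
      (⟨x, false⟩ : Lit V) ∉ Ec ∧ (⟨x, true⟩ : Lit V) ∉ Fc ∧
      insert (⟨x, false⟩ : Lit V) Ec ∈ prev ∧ insert (⟨x, true⟩ : Lit V) Fc ∈ prev ∧
      ∀ v ∈ Ec, v.var ∈ ψ.U → v.negate ∈ Fc → ¬ D v.var x)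

/-- An LDQ(D)-Res proof: a list of clauses, each a valid step from the earlier ones. -/
def IsLDQProof (ψ : DQBF V) (D : V → V → Prop) (π : List (Clause V)) : Prop :=
  ∀ i : Fin π.length, LDQStep ψ D (π.take i.val) (π.get i)

def IsLDQRefutation (ψ : DQBF V) (D : V → V → Prop) (π : List (Clause V)) : Prop :=
  IsLDQProof ψ D π ∧ (∅ : Clause V) ∈ π

/-- A single valid Q-Res step. -/
def QResStep (ψ : DQBF V) (prev : List (Clause V)) (C : Clause V) : Prop :=
  C ∈ ψ.matrix ∨
    (∃ w : Lit V, w.var ∈ ψ.U ∧ w ∉ C ∧ w.negate ∉ C ∧ insert w C ∈ prev ∧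
      ∀ l ∈ C, l.var ∈ ψ.E → w.var ∉ ψ.dep l.var) ∨
    (∃ (x : V) (Ec Fc : Clause V), x ∈ ψ.E ∧ C = Ec ∪ Fc ∧
      (⟨x, false⟩ : Lit V) ∉ Ec ∧ (⟨x, true⟩ : Lit V) ∉ Fc ∧
      insert (⟨x, false⟩ : Lit V) Ec ∈ prev ∧ insert (⟨x, true⟩ : Lit V) Fc ∈ prev ∧
      ∀ v ∈ Ec, v.var ∈ ψ.U → v.negate ∉ Fc)

def IsQResProof (ψ : DQBF V) (π : List (Clause V)) : Prop :=
  ∀ i : Fin π.length, QResStep ψ (π.take i.val) (π.get i)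

def IsQResRefutation (ψ : DQBF V) (π : List (Clause V)) : Prop :=
  IsQResProof ψ π ∧ (∅ : Clause V) ∈ π

/-! ## QBFs: DQBFs with a linear quantifier prefix -/

structure QBF (V : Type) [DecidableEq V] extends DQBF V where
  ord : V → ℕ

/-- Well-formedness of a QBF: dependency sets are induced by the prefix order. -/
def QBF.WF (ψ : QBF V) : Prop :=
  ψ.toDQBF.WF ∧
    (∀ a ∈ ψ.U ∪ ψ.E, ∀ b ∈ ψ.U ∪ ψ.E, ψ.ord a = ψ.ord b → a = b) ∧
    ∀ x ∈ ψ.E, ∀ u, u ∈ ψ.dep x ↔ u ∈ ψ.U ∧ ψ.ord u < ψ.ord x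

/-! ## IndExt-QU-Res -/

/-- The clause `¬α` of negations of the literals of a partial assignment `α`. -/
def negAssign (α : Finset (Lit V)) : Clause V := α.image Lit.negate

/-- Size of a DQBF. -/
def DQBF.size (ψ : DQBF V) : ℕ := ψ.U.card + ψ.E.card + ∑ C ∈ ψ.matrix, (C.card + 1)

/-- IndExt-QU-Res derivations: from the DQBF `ψ0`, reach a (possibly extended)
prefix together with a set of derived clauses, in the given number of steps. -/
inductive IndExtDeriv (ψ0 : DQBF V) : DQBF V → Finset (Clause V) → ℕ → Prop
  | start : IndExtDeriv ψ0 ψ0 ψ0.matrix 0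
  | res {ψ : DQBF V} {Γ : Finset (Clause V)} {n : ℕ} {Ec Fc : Clause V} {x : V} :
      IndExtDeriv ψ0 ψ Γ n → x ∈ ψ.E →
      (⟨x, false⟩ : Lit V) ∉ Ec → (⟨x, true⟩ : Lit V) ∉ Fc →
      insert (⟨x, false⟩ : Lit V) Ec ∈ Γ → insert (⟨x, true⟩ : Lit V) Fc ∈ Γ →
      IndExtDeriv ψ0 ψ (insert (Ec ∪ Fc) Γ) (n + 1)
  | red {ψ : DQBF V} {Γ : Finset (Clause V)} {n : ℕ} {C : Clause V} {w : Lit V} :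
      IndExtDeriv ψ0 ψ Γ n → insert w C ∈ Γ → w.var ∈ ψ.U → w ∉ C → w.negate ∉ C →
      (∀ l ∈ C, l.var ∈ ψ.E → w.var ∉ ψ.dep l.var) →
      IndExtDeriv ψ0 ψ (insert C Γ) (n + 1)
  | ext {ψ : DQBF V} {Γ : Finset (Clause V)} {n : ℕ} (α : Finset (Lit V)) (y1 y2 v : V) :
      IndExtDeriv ψ0 ψ Γ n →
      (∀ a ∈ α, a.var ∈ ψ.U) → v ∉ ψ.U ∪ ψ.E → y1 ∈ ψ.U ∪ ψ.E → y2 ∈ ψ.U ∪ ψ.E →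
      IndExtDeriv ψ0
        ⟨ψ.U, insert v ψ.E,
          Function.update ψ.dep v ((ψ.depOf y1 ∪ ψ.depOf y2) \ α.image Lit.var), ψ.matrix⟩
        (insert (negAssign α ∪ ({⟨v, true⟩, ⟨y1, true⟩} : Clause V))
          (insert (negAssign α ∪ ({⟨v, true⟩, ⟨y2, true⟩} : Clause V))
            (insert (negAssign α ∪ ({⟨v, false⟩, ⟨y1, false⟩, ⟨y2, false⟩} : Clause V)) Γ)))
        (n + 1)
  | weakU {ψ : DQBF V} {Γ : Finset (Clause V)} {n : ℕ} (v : V) :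
      IndExtDeriv ψ0 ψ Γ n → v ∉ ψ.U ∪ ψ.E →
      IndExtDeriv ψ0 ⟨insert v ψ.U, ψ.E, ψ.dep, ψ.matrix⟩ Γ (n + 1)
  | weakE {ψ : DQBF V} {Γ : Finset (Clause V)} {n : ℕ} (v : V) (Dv : Finset V) :
      IndExtDeriv ψ0 ψ Γ n → v ∉ ψ.U ∪ ψ.E → Dv ⊆ ψ.U →
      IndExtDeriv ψ0 ⟨ψ.U, insert v ψ.E, Function.update ψ.dep v Dv, ψ.matrix⟩ Γ (n + 1)

/-- Substituting variables in a clause. -/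
def Clause.subst (σ : V → V) (C : Clause V) : Clause V :=
  C.image fun l => (⟨σ l.var, l.pos⟩ : Lit V)

/-! ## Unit propagation, outer variables, and DQRAT(D^pu) -/

/-- Literals derivable by unit propagation from a (possibly infinite) clause set. -/
inductive UPLit (Φ : Set (Clause V)) : Lit V → Prop
  | unit {C : Clause V} {l : Lit V} : C ∈ Φ → l ∈ C →
      (∀ l' ∈ C, l' ≠ l → UPLit Φ l'.negate) → UPLit Φ l

/-- `Φ ⊢₁ ⊥`: unit propagation derives a conflict. -/
def UPBot (Φ : Set (Clause V)) : Prop := ∃ C ∈ Φ, ∀ l ∈ C, UPLit Φ l.negate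

/-- The unit clauses negating the literals of `C`. -/
def negUnits (C : Clause V) : Set (Clause V) := {D | ∃ l ∈ C, D = ({l.negate} : Clause V)}

def DQBF.Inner (ψ : DQBF V) (u : V) : Set V := {y | y ∈ ψ.E ∧ u ∈ ψ.dep y}

/-- The set of outer variables of a variable. -/
def DQBF.Outer (ψ : DQBF V) (x : V) : Set V :=
  if x ∈ ψ.U then
    {x} ∪ ((↑(ψ.U ∪ ψ.E) : Set V) ∩ ⋂ z ∈ ψ.Inner x, {y | ψ.depOf y ⊆ ψ.dep z \ {x}})
  else {y | y ∈ ψ.U ∪ ψ.E ∧ ψ.depOf y ⊆ ψ.dep x}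

/-- `y ≲_Π x`. -/
def outerLe (ψ : DQBF V) (y x : V) : Prop := y ∈ ψ.Outer x

/-- `D_C`, the union of the dependency sets of the variables of a clause. -/
def depClause (ψ : DQBF V) (C : Clause V) : Finset V := C.biUnion fun l => ψ.depOf l.var

/-- The unit clauses used in the DQRAT side condition: outer literals of `D` negated. -/
def ratUnits (ψ : DQBF V) (D : Clause V) (l : Lit V) : Set (Clause V) :=
  {Dc | ∃ x ∈ D, x ≠ l.negate ∧ outerLe ψ x.var l.var ∧ Dc = ({x.negate} : Clause V)}

/-- DQRAT(D^pu) derivations: sequences of DQBFs, each obtained from the previous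
one by one of the rules ATA, Del, UR, DQRAT∃, DQRAT∀, BPM, D^pu. -/
inductive DQRATDeriv (ψ0 : DQBF V) : DQBF V → ℕ → Prop
  | start : DQRATDeriv ψ0 ψ0 0
  | ata {ψ : DQBF V} {n : ℕ} (C : Clause V) :
      DQRATDeriv ψ0 ψ n → UPBot ((↑ψ.matrix : Set (Clause V)) ∪ negUnits C) →
      DQRATDeriv ψ0 ⟨ψ.U, ψ.E, ψ.dep, insert C ψ.matrix⟩ (n + 1)
  | del {ψ : DQBF V} {n : ℕ} (C : Clause V) :
      DQRATDeriv ψ0 ψ n → C ∈ ψ.matrix →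
      DQRATDeriv ψ0 ⟨ψ.U, ψ.E, ψ.dep, ψ.matrix.erase C⟩ (n + 1)
  | ur {ψ : DQBF V} {n : ℕ} (C : Clause V) (l : Lit V) :
      DQRATDeriv ψ0 ψ n → insert l C ∈ ψ.matrix → l ∉ C → l.var ∈ ψ.U →
      l.var ∉ depClause ψ C →
      DQRATDeriv ψ0 ⟨ψ.U, ψ.E, ψ.dep, insert C (ψ.matrix.erase (insert l C))⟩ (n + 1)
  | ratE {ψ : DQBF V} {n : ℕ} (C : Clause V) (l : Lit V) :
      DQRATDeriv ψ0 ψ n → l.var ∈ ψ.E → l ∉ C →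
      (∀ D ∈ ψ.matrix, l.negate ∈ D →
        UPBot ((↑ψ.matrix : Set (Clause V)) ∪ negUnits (insert l C) ∪ ratUnits ψ D l)) →
      DQRATDeriv ψ0 ⟨ψ.U, ψ.E, ψ.dep, insert (insert l C) ψ.matrix⟩ (n + 1)
  | ratA {ψ : DQBF V} {n : ℕ} (C : Clause V) (l : Lit V) :
      DQRATDeriv ψ0 ψ n → l.var ∈ ψ.U → l ∉ C → insert l C ∈ ψ.matrix →
      (∀ D ∈ ψ.matrix, l.negate ∈ D →
        UPBot ((↑ψ.matrix : Set (Clause V)) ∪ negUnits C ∪ {({l} : Clause V)} ∪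
          ratUnits ψ D l)) →
      DQRATDeriv ψ0 ⟨ψ.U, ψ.E, ψ.dep, insert C (ψ.matrix.erase (insert l C))⟩ (n + 1)
  | bpm {ψ : DQBF V} {n : ℕ} (ψ' : DQBF V) :
      DQRATDeriv ψ0 ψ n → ψ.U ⊆ ψ'.U → ψ.E ⊆ ψ'.E → Disjoint ψ'.U ψ'.E →
      (∀ x ∈ ψ.E, ψ'.dep x = ψ.dep x) → (∀ x ∈ ψ'.E, ψ'.dep x ⊆ ψ'.U) →
      ψ'.matrix = ψ.matrix →
      DQRATDeriv ψ0 ψ' (n + 1)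
  | dpuStep {ψ : DQBF V} {n : ℕ} (ψ' : DQBF V) :
      DQRATDeriv ψ0 ψ n → ψ'.U = ψ.U → ψ'.E = ψ.E → ψ'.matrix = ψ.matrix →
      (∀ u x, x ∈ ψ.E → u ∉ ψ'.dep x → (u ∉ ψ.dep x ∨ ¬ Dpu ψ u x)) →
      DQRATDeriv ψ0 ψ' (n + 1)

/-- A DQRAT(D^pu) refutation of `ψ0` with `n` steps. -/
def DQRATRefutable (ψ0 : DQBF V) (n : ℕ) : Prop :=
  ∃ ψ : DQBF V, DQRATDeriv ψ0 ψ n ∧ (∅ : Clause V) ∈ ψ.matrix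

/-! ## The ts-LQParity formulas -/

inductive PVar : Type where
  | x : ℕ → PVar
  | z : PVar
  | t : ℕ → PVar
  | s : ℕ → PVar
  | b : PVar
deriving DecidableEq

def L (v : PVar) (b : Bool) : Lit PVar := ⟨v, b⟩

/-- The four clauses of `xor_l(o1, o2, o, zl)`. -/
def xorl (o1 o2 o : PVar) (zl : Lit PVar) : Finset (Clause PVar) :=
  { {zl, L o1 false, L o2 false, L o false},
    {zl, L o1 true,  L o2 true,  L o false},
    {zl, L o1 false, L o2 true,  L o true},
    {zl, L o1 true,  L o2 false, L o true} }

def tsMatrix (N : ℕ) : Finset (Clause PVar) :=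
  xorl (.x 1) (.x 2) (.t 2) (L .z true) ∪
    (Finset.Icc 3 N).biUnion (fun i => xorl (.t (i - 1)) (.x i) (.t i) (L .z true)) ∪
    xorl (.x 1) (.x 2) (.s 2) (L .z false) ∪
    (Finset.Icc 3 N).biUnion (fun i => xorl (.s (i - 1)) (.x i) (.s i) (L .z false)) ∪
    {{L .z true, L (.t N) true}, {L .z false, L (.s N) false}}

def tsDep : PVar → Finset PVar
  | .t _ => {.z}
  | .s _ => {.z}
  | .b => {.z}
  | _ => ∅

/-- The QBF ts-LQParity(N), presented as a DQBF. -/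
def tsLQParity (N : ℕ) : DQBF PVar where
  U := {.z}
  E := (Finset.Icc 1 N).image PVar.x ∪ (Finset.Icc 2 N).image PVar.t ∪
    (Finset.Icc 2 N).image PVar.s
  dep := tsDep
  matrix := tsMatrix N

def bridgedMatrix (N : ℕ) : Finset (Clause PVar) :=
  tsMatrix N ∪
    { {L .z true, L (.t N) false, L .b true}, {L .z true, L (.t N) true, L .b false},
      {L .z false, L (.s N) false, L .b true}, {L .z false, L (.s N) true, L .b false} }

/-- The QBF Bridged ts-LQParity(N), presented as a DQBF. -/
def bridged (N : ℕ) : DQBF PVar where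
  U := {.z}
  E := (Finset.Icc 1 N).image PVar.x ∪ (Finset.Icc 2 N).image PVar.t ∪
    (Finset.Icc 2 N).image PVar.s ∪ {.b}
  dep := tsDep
  matrix := bridgedMatrix N

/-! ## The NP-hardness gadget -/

inductive GVar (W : Type) : Type where
  | v : W → GVar W
  | u : GVar W
  | x : GVar W
deriving DecidableEq

/-- The gadget DQBF `∀(V ∪ {u}) ∃x(V ∪ {u}). (⋁_{v ∈ V} v) ∨ u ∨ ¬x`. -/
def gadget {W : Type} [DecidableEq W] (Vs : Finset W) : DQBF (GVar W) where
  U := Vs.image GVar.v ∪ {GVar.u}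
  E := {GVar.x}
  dep := fun y => if y = GVar.x then Vs.image GVar.v ∪ {GVar.u} else ∅
  matrix := {Vs.image (fun w => (⟨GVar.v w, true⟩ : Lit (GVar W))) ∪
    ({⟨GVar.u, true⟩, ⟨GVar.x, false⟩} : Clause (GVar W))}

/-- The Skolem function `f_x = φ(V) ∧ u`. -/
def gadgetSkolem {W : Type} [DecidableEq W] (φ : Finset (Clause W)) :
    GVar W → (GVar W → Bool) → Bool := fun y β =>
  if y = GVar.x then
    (decide (∀ C ∈ φ, ∃ l ∈ C, β (GVar.v l.var) = l.pos)) && β GVar.u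
  else false

/-! ### Auxiliary material for the soundness proof of `D^pu` -/

open Classical in
/-- The modified Skolem function set used in the single-variable reduction step. -/
noncomputable def dpuG (ψ : DQBF V) (u : V) (f : V → (V → Bool) → Bool) :
    V → (V → Bool) → Bool := fun y β =>
  if y ∈ ψ.Sset u then
    (if ConnPU ψ ⟨u, false⟩ ⟨y, f y (Function.update β u true)⟩ ∧
        (β u = true ∨ ¬ ConnPU ψ ⟨u, true⟩ ⟨y, f y (Function.update β u false)⟩)
      then f y (Function.update β u true) else f y (Function.update β u false))
  else f y β

open Classical in
/-- Drop `u` from the dependency set of every variable `x` with `¬ Dpu ψ u x`. -/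
noncomputable def dropDep (ψ : DQBF V) (u : V) : DQBF V :=
  ⟨ψ.U, ψ.E, fun x => if Dpu ψ u x then ψ.dep x else ψ.dep x \ {u}, ψ.matrix⟩

lemma pathLPU_mono {ψ ψ' : DQBF V} (hm : ψ'.matrix = ψ.matrix) {w : Lit V}
    {χ : Finset (Clause V)} {S S' : Finset V} (hS : S ⊆ S') {l : Lit V}
    (h : PathLPU ψ w χ S l) : PathLPU ψ' w χ S' l := by
  induction h with
  | base h1 h2 h3 => exact .base h1 h2 (hS h3)
  | step _ h2 h3 h4 h5 h6 h7 ih => exact .step ih (by rw [hm]; exact h2) h3 h4 h5 h6 (hS h7)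

lemma sset_mono {ψ ψ' : DQBF V} (hE : ψ'.E = ψ.E) (hd : ∀ x, ψ'.dep x ⊆ ψ.dep x)
    (w : V) : ψ'.Sset w ⊆ ψ.Sset w := by
  intro y hy
  rw [DQBF.Sset, Finset.mem_filter] at hy ⊢
  exact ⟨hE ▸ hy.1, hd y hy.2⟩

lemma connPU_mono {ψ ψ' : DQBF V} (hm : ψ'.matrix = ψ.matrix) (hE : ψ'.E = ψ.E)
    (hd : ∀ x, ψ'.dep x ⊆ ψ.dep x) {w l : Lit V} (h : ConnPU ψ' w l) : ConnPU ψ w l := by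
  have hχ : ψ'.litClauses w = ψ.litClauses w := by unfold DQBF.litClauses; rw [hm]
  unfold ConnPU at h ⊢
  rw [hχ] at h
  exact pathLPU_mono hm.symm (sset_mono hE hd w.var) h

lemma dpu_mono {ψ ψ' : DQBF V} (hm : ψ'.matrix = ψ.matrix) (hE : ψ'.E = ψ.E)
    (hd : ∀ x, ψ'.dep x ⊆ ψ.dep x) {u x : V} (h : Dpu ψ' u x) : Dpu ψ u x := by
  obtain ⟨h1, h2⟩ := h
  refine ⟨hd x h1, ?_⟩
  rcases h2 with ⟨ha, hb⟩ | ⟨ha, hb⟩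
  · exact Or.inl ⟨connPU_mono hm hE hd ha, connPU_mono hm hE hd hb⟩
  · exact Or.inr ⟨connPU_mono hm hE hd ha, connPU_mono hm hE hd hb⟩

lemma dropDep_isTrue (ψ : DQBF V) (u : V) (hu : u ∈ ψ.U)
    (hdisj : Disjoint ψ.U ψ.E) (ht : ψ.IsTrue) : (dropDep ψ u).IsTrue := by
  classical
  obtain ⟨f, hresp, hsat⟩ := ht
  have huE : u ∉ ψ.E := Finset.disjoint_left.mp hdisj hu
  refine ⟨dpuG ψ u f, ?_, ?_⟩
  · -- `Respects`
    intro x hx β γ hagree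
    have hx' : x ∈ ψ.E := hx
    by_cases hxS : x ∈ ψ.Sset u
    · have hux : u ∈ ψ.dep x := (Finset.mem_filter.mp hxS).2
      have hup : ∀ c : Bool, f x (Function.update β u c) = f x (Function.update γ u c) := by
        intro c
        apply hresp x hx'
        intro v hv
        rcases eq_or_ne v u with rfl | hvu
        · simp
        · rw [Function.update_of_ne hvu, Function.update_of_ne hvu]
          apply hagree
          show v ∈ (if Dpu ψ u x then ψ.dep x else ψ.dep x \ {u})
          by_cases hD : Dpu ψ u x
          · rw [if_pos hD]; exact hv
          · rw [if_neg hD]; exact Finset.mem_sdiff.mpr ⟨hv, by simpa using hvu⟩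
      show dpuG ψ u f x β = dpuG ψ u f x γ
      simp only [dpuG]
      rw [if_pos hxS, if_pos hxS, hup true, hup false]
      by_cases hD : Dpu ψ u x
      · have hbu : β u = γ u := by
          apply hagree
          show u ∈ (if Dpu ψ u x then ψ.dep x else ψ.dep x \ {u})
          rw [if_pos hD]; exact hux
        rw [hbu]
      · by_cases h01 : f x (Function.update γ u true) = f x (Function.update γ u false)
        · rw [h01, ite_self, ite_self]
        · by_cases hP1 : ConnPU ψ ⟨u, false⟩ ⟨x, f x (Function.update γ u true)⟩
          · have hnP0 : ¬ ConnPU ψ ⟨u, true⟩ ⟨x, f x (Function.update γ u false)⟩ := by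
              intro hP0
              apply hD
              refine ⟨hux, ?_⟩
              rcases Bool.eq_false_or_eq_true (f x (Function.update γ u true)) with h1 | h1 <;>
                rcases Bool.eq_false_or_eq_true (f x (Function.update γ u false)) with h0 | h0
              · exact absurd (h1.trans h0.symm) h01
              · rw [h1] at hP1; rw [h0] at hP0
                exact Or.inr ⟨hP1, hP0⟩
              · rw [h1] at hP1; rw [h0] at hP0
                exact Or.inl ⟨hP0, hP1⟩
              · exact absurd (h1.trans h0.symm) h01
            rw [if_pos ⟨hP1, Or.inr hnP0⟩, if_pos ⟨hP1, Or.inr hnP0⟩]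
          · rw [if_neg (fun h => hP1 h.1), if_neg (fun h => hP1 h.1)]
    · show dpuG ψ u f x β = dpuG ψ u f x γ
      simp only [dpuG]
      rw [if_neg hxS, if_neg hxS]
      apply hresp x hx'
      intro v hv
      apply hagree
      show v ∈ (if Dpu ψ u x then ψ.dep x else ψ.dep x \ {u})
      have hvu : v ≠ u := fun h => hxS (Finset.mem_filter.mpr ⟨hx', by rw [← h]; exact hv⟩)
      by_cases hD : Dpu ψ u x
      · rw [if_pos hD]; exact hv
      · rw [if_neg hD]; exact Finset.mem_sdiff.mpr ⟨hv, by simpa using hvu⟩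
  · -- satisfaction
    intro β C hCm
    have hC : C ∈ ψ.matrix := hCm
    show Clause.Sat (ψ.Completed (dpuG ψ u f) β) C
    by_cases hub : (⟨u, β u⟩ : Lit V) ∈ C
    · exact ⟨⟨u, β u⟩, hub, by simp [DQBF.Completed, huE]⟩
    · by_contra hbrk
      simp only [Clause.Sat] at hbrk
      push_neg at hbrk
      have key : ∀ (c : Bool) (l : Lit V), l ∈ C → ((⟨u, c⟩ : Lit V) ∉ C) →
          ψ.Completed f (Function.update β u c) l.var = l.pos →
          l.var ∈ ψ.Sset u ∧ f l.var (Function.update β u c) = l.pos ∧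
            f l.var (Function.update β u (!c)) = !l.pos := by
        intro c l hlC hucC hA
        have hV : ψ.Completed (dpuG ψ u f) β l.var ≠ l.pos := hbrk l hlC
        by_cases hlE : l.var ∈ ψ.E
        · have hA2 : f l.var (Function.update β u c) = l.pos := by
            simpa [DQBF.Completed, hlE] using hA
          have hgv : ψ.Completed (dpuG ψ u f) β l.var = dpuG ψ u f l.var β := by
            simp [DQBF.Completed, hlE]
          by_cases hS : l.var ∈ ψ.Sset u
          · refine ⟨hS, hA2, ?_⟩
            by_contra hne
            have heq : f l.var (Function.update β u (!c)) = l.pos := by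
              rcases Bool.eq_false_or_eq_true (f l.var (Function.update β u (!c))) with h | h <;>
                rcases Bool.eq_false_or_eq_true l.pos with h' | h' <;> simp_all
            have hT : f l.var (Function.update β u true) = l.pos := by
              cases c
              · simpa using heq
              · exact hA2
            have hF : f l.var (Function.update β u false) = l.pos := by
              cases c
              · exact hA2
              · simpa using heq
            apply hV
            rw [hgv]
            simp only [dpuG]
            rw [if_pos hS, hT, hF, ite_self]
          · have hud : u ∉ ψ.dep l.var := fun h => hS (Finset.mem_filter.mpr ⟨hlE, h⟩)
            have hfb : f l.var (Function.update β u c) = f l.var β := by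
              apply hresp l.var hlE
              intro v hv
              rw [Function.update_of_ne (fun h => hud (by rw [← h]; exact hv))]
            refine absurd ?_ hV
            rw [hgv]
            simp only [dpuG]
            rw [if_neg hS, ← hfb]
            exact hA2
        · have h2 : ψ.Completed (dpuG ψ u f) β l.var = β l.var := by
            simp [DQBF.Completed, hlE]
          have h1 : Function.update β u c l.var = l.pos := by
            simpa [DQBF.Completed, hlE] using hA
          rcases eq_or_ne l.var u with hlu | hlu
          · rw [hlu, Function.update_self] at h1
            have hl' : l = (⟨u, c⟩ : Lit V) := by
              have h3 : l = (⟨l.var, l.pos⟩ : Lit V) := rfl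
              rw [h3, hlu, h1]
            exact absurd (hl' ▸ hlC) hucC
          · rw [Function.update_of_ne hlu] at h1
            exact absurd (h2.trans h1) hV
      rcases Bool.eq_false_or_eq_true (β u) with hbu | hbu
      · -- side `u = 1`
        rw [hbu] at hub
        obtain ⟨m, hmC, hm⟩ := hsat (Function.update β u true) C hC
        obtain ⟨hmS, hm1, hm0⟩ := key true m hmC hub hm
        simp only [Bool.not_true] at hm0
        have hmE : m.var ∈ ψ.E := (Finset.mem_filter.mp hmS).1
        have hVm : ψ.Completed (dpuG ψ u f) β m.var ≠ m.pos := hbrk m hmC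
        have hgm : ψ.Completed (dpuG ψ u f) β m.var = dpuG ψ u f m.var β := by
          simp [DQBF.Completed, hmE]
        have hnPm : ¬ ConnPU ψ ⟨u, false⟩ ⟨m.var, m.pos⟩ := by
          intro hPm
          apply hVm
          rw [hgm]
          simp only [dpuG]
          rw [if_pos hmS, hm1, hm0, if_pos ⟨hPm, Or.inl hbu⟩]
        by_cases hCu : (⟨u, false⟩ : Lit V) ∈ C
        · exact hnPm (PathLPU.base (Finset.mem_filter.mpr ⟨hC, hCu⟩) hmC hmS)
        · obtain ⟨l, hlC, hl⟩ := hsat (Function.update β u false) C hC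
          obtain ⟨hlS, hl0, hl1⟩ := key false l hlC hCu hl
          simp only [Bool.not_false] at hl1
          have hlE : l.var ∈ ψ.E := (Finset.mem_filter.mp hlS).1
          have hVl : ψ.Completed (dpuG ψ u f) β l.var ≠ l.pos := hbrk l hlC
          have hgl : ψ.Completed (dpuG ψ u f) β l.var = dpuG ψ u f l.var β := by
            simp [DQBF.Completed, hlE]
          have hPl : ConnPU ψ ⟨u, false⟩ ⟨l.var, !l.pos⟩ ∧
              (β u = true ∨ ¬ ConnPU ψ ⟨u, true⟩ ⟨l.var, l.pos⟩) := by
            by_contra hcon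
            apply hVl
            rw [hgl]
            simp only [dpuG]
            rw [if_pos hlS, hl0, hl1, if_neg hcon]
          have hne : m ≠ (⟨l.var, l.pos⟩ : Lit V) := by
            intro h
            have h1 : m.var = l.var := by rw [h]
            have h2 : m.pos = l.pos := by rw [h]
            rw [h1, h2, hl1] at hm1
            simp at hm1
          apply hnPm
          show PathLPU ψ ⟨u, false⟩ (ψ.litClauses ⟨u, false⟩) (ψ.Sset u) ⟨m.var, m.pos⟩
          refine PathLPU.step hPl.1 hC ?_ ?_ hmC ?_ hmS
          · simp only [Lit.negate, Bool.not_not]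
            exact hlC
          · exact hub
          · simp only [Lit.negate, Bool.not_not]
            exact hne
      · -- side `u = 0`
        rw [hbu] at hub
        obtain ⟨l, hlC, hl⟩ := hsat (Function.update β u false) C hC
        obtain ⟨hlS, hl0, hl1⟩ := key false l hlC hub hl
        simp only [Bool.not_false] at hl1
        have hlE : l.var ∈ ψ.E := (Finset.mem_filter.mp hlS).1
        have hVl : ψ.Completed (dpuG ψ u f) β l.var ≠ l.pos := hbrk l hlC
        have hgl : ψ.Completed (dpuG ψ u f) β l.var = dpuG ψ u f l.var β := by
          simp [DQBF.Completed, hlE]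
        have hPl : ConnPU ψ ⟨u, false⟩ ⟨l.var, !l.pos⟩ ∧
            (β u = true ∨ ¬ ConnPU ψ ⟨u, true⟩ ⟨l.var, l.pos⟩) := by
          by_contra hcon
          apply hVl
          rw [hgl]
          simp only [dpuG]
          rw [if_pos hlS, hl0, hl1, if_neg hcon]
        have hnP0 : ¬ ConnPU ψ ⟨u, true⟩ ⟨l.var, l.pos⟩ := by
          rcases hPl.2 with h | h
          · rw [hbu] at h; exact absurd h (by simp)
          · exact h
        by_cases hCu : (⟨u, true⟩ : Lit V) ∈ C
        · exact hnP0 (PathLPU.base (Finset.mem_filter.mpr ⟨hC, hCu⟩) hlC hlS)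
        · obtain ⟨m, hmC, hm⟩ := hsat (Function.update β u true) C hC
          obtain ⟨hmS, hm1, hm0⟩ := key true m hmC hCu hm
          simp only [Bool.not_true] at hm0
          have hmE : m.var ∈ ψ.E := (Finset.mem_filter.mp hmS).1
          have hVm : ψ.Completed (dpuG ψ u f) β m.var ≠ m.pos := hbrk m hmC
          have hgm : ψ.Completed (dpuG ψ u f) β m.var = dpuG ψ u f m.var β := by
            simp [DQBF.Completed, hmE]
          have hne : m ≠ (⟨l.var, l.pos⟩ : Lit V) := by
            intro h
            have h1 : m.var = l.var := by rw [h]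
            have h2 : m.pos = l.pos := by rw [h]
            rw [h1, h2, hl1] at hm1
            simp at hm1
          have hPmem : ConnPU ψ ⟨u, false⟩ ⟨m.var, m.pos⟩ := by
            show PathLPU ψ ⟨u, false⟩ (ψ.litClauses ⟨u, false⟩) (ψ.Sset u) ⟨m.var, m.pos⟩
            refine PathLPU.step hPl.1 hC ?_ ?_ hmC ?_ hmS
            · simp only [Lit.negate, Bool.not_not]
              exact hlC
            · exact hCu
            · simp only [Lit.negate, Bool.not_not]
              exact hne
          have hforce : ConnPU ψ ⟨u, true⟩ ⟨m.var, !m.pos⟩ := by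
            by_contra hP
            apply hVm
            rw [hgm]
            simp only [dpuG]
            rw [if_pos hmS, hm1, hm0, if_pos ⟨hPmem, Or.inr hP⟩]
          apply hnP0
          show PathLPU ψ ⟨u, true⟩ (ψ.litClauses ⟨u, true⟩) (ψ.Sset u) ⟨l.var, l.pos⟩
          refine PathLPU.step hforce hC ?_ ?_ hlC ?_ hlS
          · simp only [Lit.negate, Bool.not_not]
            exact hmC
          · exact hub
          · simp only [Lit.negate, Bool.not_not]
            exact fun hh => hne hh.symm

lemma foldl_dropDep_inv (L : List V) :
    ∀ ψ : DQBF V, (∀ v ∈ L, v ∈ ψ.U) → Disjoint ψ.U ψ.E → ψ.IsTrue →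
      (L.foldl dropDep ψ).U = ψ.U ∧ (L.foldl dropDep ψ).E = ψ.E ∧
      (L.foldl dropDep ψ).matrix = ψ.matrix ∧
      (∀ x, (L.foldl dropDep ψ).dep x ⊆ ψ.dep x) ∧
      (L.foldl dropDep ψ).IsTrue ∧
      (∀ v ∈ L, ∀ x, ¬ Dpu ψ v x → v ∉ (L.foldl dropDep ψ).dep x) := by
  classical
  induction L with
  | nil =>
    intro ψ _ _ ht
    exact ⟨rfl, rfl, rfl, fun x => subset_rfl, ht, by simp⟩
  | cons u L ih =>
    intro ψ hL hdisj ht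
    have huU : u ∈ ψ.U := hL u (by simp)
    have h1E : (dropDep ψ u).E = ψ.E := rfl
    have h1M : (dropDep ψ u).matrix = ψ.matrix := rfl
    have h1d : ∀ x, (dropDep ψ u).dep x ⊆ ψ.dep x := by
      intro x
      show (if Dpu ψ u x then ψ.dep x else ψ.dep x \ {u}) ⊆ ψ.dep x
      split
      · exact subset_rfl
      · exact Finset.sdiff_subset
    have ht1 : (dropDep ψ u).IsTrue := dropDep_isTrue ψ u huU hdisj ht
    have hres := ih (dropDep ψ u) (fun v hv => hL v (List.mem_cons_of_mem _ hv)) hdisj ht1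
    obtain ⟨hU2, hE2, hM2, hd2, ht2, hrem2⟩ := hres
    have hfold : (u :: L).foldl dropDep ψ = L.foldl dropDep (dropDep ψ u) := rfl
    rw [hfold]
    refine ⟨hU2, hE2.trans h1E, hM2.trans h1M, fun x => (hd2 x).trans (h1d x), ht2, ?_⟩
    intro v hv x hnD
    rcases List.mem_cons.mp hv with rfl | hv'
    · intro hmem
      have hmem2 : v ∈ (dropDep ψ v).dep x := hd2 x hmem
      revert hmem2
      show v ∈ (if Dpu ψ v x then ψ.dep x else ψ.dep x \ {v}) → False
      rw [if_neg hnD]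
      intro h
      exact (Finset.mem_sdiff.mp h).2 (Finset.mem_singleton_self v)
    · have hnD1 : ¬ Dpu (dropDep ψ u) v x := fun h => hnD (dpu_mono h1M h1E h1d h)
      exact hrem2 v hv' x hnD1

/-- Soundness of the pure universal dependency scheme.
If `Πφ` is a true DQBF and `Π'` is the prefix with the same variables in which the
dependency set of every existential `x` is `{u ∈ D_x : (u,x) ∈ D^pu(Πφ)}`,
then `Π'φ` is true. -/
theorem dpu_soundness {V : Type} [DecidableEq V] (ψ ψ' : DQBF V) (hWF : ψ.WF)
    (hU : ψ'.U = ψ.U) (hE : ψ'.E = ψ.E) (hM : ψ'.matrix = ψ.matrix)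
    (hdep : ∀ x ∈ ψ.E, ∀ u : V, u ∈ ψ'.dep x ↔ (u ∈ ψ.dep x ∧ Dpu ψ u x))
    (ht : ψ.IsTrue) : ψ'.IsTrue := by
  classical
  obtain ⟨hdisj, hdepU, -⟩ := hWF
  obtain ⟨hU2, hE2, hM2, hd2, ⟨f, hfr, hfs⟩, hrem⟩ :=
    foldl_dropDep_inv ψ.U.toList ψ (fun v hv => Finset.mem_toList.mp hv) hdisj ht
  refine ⟨f, ?_, ?_⟩
  · intro x hx β γ hag
    have hxE : x ∈ ψ.E := hE ▸ hx
    apply hfr x (by rw [hE2]; exact hxE)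
    intro v hv
    apply hag
    have hv1 : v ∈ ψ.dep x := hd2 x hv
    have hvU : v ∈ ψ.U := hdepU x hxE hv1
    have hDpu : Dpu ψ v x := by
      by_contra hn
      exact hrem v (Finset.mem_toList.mpr hvU) x hn hv
    exact (hdep x hxE v).mpr ⟨hv1, hDpu⟩
  · intro β C hCm
    have hC : C ∈ (ψ.U.toList.foldl dropDep ψ).matrix := by rw [hM2, ← hM]; exact hCm
    have hsatC := hfs β C hC
    have hfun : ψ'.Completed f β = (ψ.U.toList.foldl dropDep ψ).Completed f β := by
      funext v
      unfold DQBF.Completed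
      rw [hE, hE2]
    rw [hfun]
    exact hsatC
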